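/- arXiv:2405.01812 — 2 statements merged into one kernel-verified Lean document; each statement's English description precedes it below -/
import Mathlib

section
/- Let {a_n} be a sequence of nonnegative real numbers such that Σ_{n≥1} a_n/n < ∞, and suppose there exists C > 0 such that |a_n - a_{n+1}| ≤ C/n for all n ≥ 1. Then a_n → 0 as n → ∞. -/
open Filter

theorem stmt_2 (a : ℕ → ℝ) (C : ℝ) (hC : 0 < C) (ha : ∀ n, 0 ≤ a n)
    (hsum : Summable (fun n : ℕ => a n / n))
    (hdiff : ∀ n : ℕ, 1 ≤ n → |a n - a (n + 1)| ≤ C / n) :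
    Tendsto a atTop (nhds 0) := by
  have key : ∀ n : ℕ, 1 ≤ n → ∀ j : ℕ, a n - C * j / n ≤ a (n + j) := by
    intro n hn j
    have hn' : (1:ℝ) ≤ (n:ℝ) := by exact_mod_cast hn
    induction j with
    | zero => simp
    | succ j ih =>
      have hnj : 1 ≤ n + j := le_trans hn (Nat.le_add_right n j)
      have h1 := hdiff (n + j) hnj
      have h2 : a (n+j) - a (n+j+1) ≤ C / ((n:ℝ)+j) := by
        refine le_trans (le_abs_self _) (le_trans h1 ?_)
        push_cast
        exact le_refl _
      have h3 : C / ((n:ℝ)+j) ≤ C / n := by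
        gcongr
        simp
      have halg : C * ((j:ℝ)+1) / n = C * j / n + C / n := by ring
      have hcast : ((j+1 : ℕ) : ℝ) = (j:ℝ) + 1 := by push_cast; ring
      rw [show n + (j+1) = (n + j) + 1 from rfl, hcast, halg]
      linarith
  rw [Metric.tendsto_atTop]
  intro ε hε
  have hc : 0 < ε/2 * (ε/(2*C)) / (1 + ε/(2*C)) := by positivity
  set c := ε/2 * (ε/(2*C)) / (1 + ε/(2*C)) with hcdef
  obtain ⟨s, hs⟩ := summable_iff_vanishing.mp hsum (Metric.ball 0 c) (Metric.ball_mem_nhds 0 hc)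
  refine ⟨max (s.sup id + 1) (⌈2*C/ε⌉₊ + 1), fun n hn => ?_⟩
  have hs1 : s.sup id + 1 ≤ n := le_trans (le_max_left _ _) hn
  have hn2 : ⌈2*C/ε⌉₊ + 1 ≤ n := le_trans (le_max_right _ _) hn
  have hn1 : 1 ≤ n := le_trans (Nat.le_add_left 1 _) hn2
  have hn1' : (1:ℝ) ≤ (n:ℝ) := by exact_mod_cast hn1
  by_contra hcon
  push_neg at hcon
  have hεa : ε ≤ a n := by
    rw [Real.dist_eq, sub_zero, abs_of_nonneg (ha n)] at hcon
    exact hcon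
  have hn2C : 2*C/ε < (n:ℝ) := by
    calc 2*C/ε ≤ (⌈2*C/ε⌉₊ : ℝ) := Nat.le_ceil _
    _ < (n:ℝ) := by exact_mod_cast hn2
  set L := ⌊ε * n / (2*C)⌋₊ with hLdef
  have hx1 : (1:ℝ) ≤ ε * n / (2*C) := by
    rw [le_div_iff₀ (by positivity)]
    rw [div_lt_iff₀ hε] at hn2C
    nlinarith
  have hLle : (L:ℝ) ≤ ε * n / (2*C) := Nat.floor_le (by positivity)
  have hLgt : ε * n / (2*C) < (L:ℝ) + 1 := Nat.lt_floor_add_one _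
  -- lower bound on a k for k in the block
  have habove : ∀ k ∈ Finset.Icc n (n+L), ε/2 ≤ a k := by
    intro k hk
    rw [Finset.mem_Icc] at hk
    obtain ⟨j, rfl⟩ := Nat.exists_eq_add_of_le hk.1
    have hj : (j:ℝ) ≤ (L:ℝ) := by exact_mod_cast (by omega : j ≤ L)
    have hkey := key n hn1 j
    have h4 : C * (j:ℝ) / n ≤ ε/2 := by
      rw [div_le_iff₀ (by positivity)]
      have hjx : (j:ℝ) ≤ ε * n / (2*C) := le_trans hj hLle
      rw [le_div_iff₀ (by positivity)] at hjx
      nlinarith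
    linarith
  have hdisj : Disjoint (Finset.Icc n (n+L)) s := by
    rw [Finset.disjoint_left]
    intro k hk hks
    rw [Finset.mem_Icc] at hk
    have : k ≤ s.sup id := Finset.le_sup (f := id) hks
    omega
  have hSnn : (0:ℝ) ≤ ∑ k ∈ Finset.Icc n (n+L), a k / k := by
    exact Finset.sum_nonneg fun k _ => div_nonneg (ha k) (Nat.cast_nonneg k)
  have hsum_lb : ((L:ℝ)+1) * (ε/2 / ((n:ℝ)+L)) ≤ ∑ k ∈ Finset.Icc n (n+L), a k / k := by
    have hstep : ∑ _k ∈ Finset.Icc n (n+L), (ε/2/((n:ℝ)+L)) ≤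
        ∑ k ∈ Finset.Icc n (n+L), a k / k := by
      apply Finset.sum_le_sum
      intro k hk
      have hk' := Finset.mem_Icc.mp hk
      have hk0 : (0:ℝ) < (k:ℝ) := by
        have : 1 ≤ k := le_trans hn1 hk'.1
        exact_mod_cast this
      have hkub : (k:ℝ) ≤ (n:ℝ) + L := by exact_mod_cast hk'.2
      exact div_le_div₀ (ha k) (habove k hk) hk0 hkub
    have hcard : (Finset.Icc n (n+L)).card = L + 1 := by
      rw [Nat.card_Icc]; omega
    rw [Finset.sum_const, hcard, nsmul_eq_mul] at hstep
    calc ((L:ℝ)+1) * (ε/2 / ((n:ℝ)+L)) = ((L+1 : ℕ):ℝ) * (ε/2/((n:ℝ)+L)) := by push_cast; ring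
    _ ≤ _ := hstep
  have hclt : c < ((L:ℝ)+1) * (ε/2 / ((n:ℝ)+L)) := by
    have hu : 0 < ε/(2*C) := by positivity
    set u := ε/(2*C) with hu_def
    have h1 : u * n < (L:ℝ) + 1 := by
      calc u * n = ε * n / (2*C) := by rw [hu_def]; ring
      _ < _ := hLgt
    have hnL : (0:ℝ) < (n:ℝ) + L := by positivity
    have hεpos : (0:ℝ) < ε/2 := by linarith
    have e1 : ((L:ℝ)+1) * (ε/2 / ((n:ℝ)+L)) = ((L:ℝ)+1)*(ε/2)/((n:ℝ)+L) := by ring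
    rw [hcdef, e1, div_lt_div_iff₀ (by positivity) hnL]
    nlinarith [mul_lt_mul_of_pos_left h1 hεpos, mul_pos hεpos hu]
  have hball := hs (Finset.Icc n (n+L)) hdisj
  rw [Metric.mem_ball, dist_zero_right, Real.norm_eq_abs, abs_of_nonneg hSnn] at hball
  linarith
end

section
/- Let Σ_{n≥1} a_n/n < ∞ with a_n ≥ 0 and suppose a_n does not converge to 0. Then there exists C such that for infinitely many n, |a_{n+1} - a_n| > C/n. Equivalently (contrapositive form of Lemma 4.3): if a_n ≥ 0, Σ a_n/n < ∞, and limsup a_n > 0, then for every C > 0 there exist infinitely many n with |a_{n+1} - a_n| > C/n. -/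
/-!
If `|a (n + 1) - a n| ≤ C / n` for large `n` and `ε ≤ a m`, then `a` stays above `ε / 2` on the
block `[m, m + ε m / (2 C))`, and that block contributes at least a fixed positive constant
(about `ε² / (4 C + 2 ε)`) to `∑ a n / n`. Since the tails of a convergent series tend to zero,
`ε ≤ a m` can only happen finitely often, so `a → 0`.
-/

open Filter Topology Finset

theorem abs_sub_le_of_abs_succ_sub_le {a : ℕ → ℝ} {C : ℝ} {m k : ℕ} (hm : 0 < m) (hC : 0 ≤ C)
    (hstep : ∀ n, m ≤ n → |a (n + 1) - a n| ≤ C / n) (hmk : m ≤ k) :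
    |a k - a m| ≤ (k - m) * (C / m) := by
  have hd : ∀ {n}, m ≤ n → n < k → dist (a n) (a (n + 1)) ≤ C / m := fun {n} hmn _ =>
    calc dist (a n) (a (n + 1)) = |a (n + 1) - a n| := by rw [dist_comm, Real.dist_eq]
      _ ≤ C / n := hstep n hmn
      _ ≤ C / m := div_le_div_of_nonneg_left hC (by exact_mod_cast hm) (by exact_mod_cast hmn)
  simpa [← Real.dist_eq, dist_comm, Nat.cast_sub hmk] using dist_le_Ico_sum_of_dist_le hmk hd

theorem sum_Ico_le_tsum_nat_add {f : ℕ → ℝ} (hf : ∀ n, 0 ≤ f n) (hsum : Summable f) (m n : ℕ) :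
    ∑ k ∈ Ico m n, f k ≤ ∑' k, f (k + m) := by
  rw [sum_Ico_eq_sum_range]
  simp_rw [add_comm m]
  exact ((summable_nat_add_iff m).2 hsum).sum_le_tsum _ fun k _ => hf _

theorem le_sum_Ico_div_of_abs_succ_sub_le {a : ℕ → ℝ} {C ε : ℝ} {m L : ℕ} (hm : 0 < m)
    (hC : 0 ≤ C) (hε : 0 ≤ ε) (hstep : ∀ n, m ≤ n → |a (n + 1) - a n| ≤ C / n)
    (hεa : ε ≤ a m) (hL : C * L ≤ ε * m / 2) :
    L * (ε / 2) / (m + L) ≤ ∑ k ∈ Ico m (m + L), a k / k := by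
  have hmR : (0 : ℝ) < m := by exact_mod_cast hm
  have hterm : ∀ k ∈ Ico m (m + L), ε / 2 / (m + L) ≤ a k / k := by
    intro k hk
    obtain ⟨hmk, hkL⟩ := mem_Ico.1 hk
    have hkR : (k : ℝ) < m + L := by exact_mod_cast hkL
    have hclose := abs_sub_le_of_abs_succ_sub_le hm hC hstep hmk
    have hdrift : (k - m) * (C / m) ≤ ε / 2 := by
      rw [mul_div_assoc', div_le_iff₀ hmR]
      nlinarith
    have hak : ε / 2 ≤ a k := by linarith [(abs_le.1 hclose).1]
    calc ε / 2 / (m + L) ≤ ε / 2 / k :=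
          div_le_div_of_nonneg_left (by positivity) (by exact_mod_cast hm.trans_le hmk) hkR.le
      _ ≤ a k / k := by gcongr
  calc L * (ε / 2) / (m + L) = #(Ico m (m + L)) • (ε / 2 / (m + L)) := by
        rw [Nat.card_Ico, Nat.add_sub_cancel_left, nsmul_eq_mul, mul_div_assoc]
    _ ≤ ∑ k ∈ Ico m (m + L), a k / k := card_nsmul_le_sum _ _ _ hterm

theorem tendsto_zero_of_summable_div_of_abs_succ_sub_le {a : ℕ → ℝ} (ha : ∀ n, 0 ≤ a n)
    (hsum : Summable fun n : ℕ => a n / n) {C : ℝ} (hC : 0 < C)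
    (hstep : ∀ᶠ n in atTop, |a (n + 1) - a n| ≤ C / n) : Tendsto a atTop (𝓝 0) := by
  refine tendsto_order.2 ⟨fun b hb => .of_forall fun n => hb.trans_le (ha n), fun ε hε => ?_⟩
  by_contra hfreq
  simp only [not_eventually, not_lt] at hfreq
  set r := ε / (2 * C) with hr
  have hr0 : 0 < r := by positivity
  set c := ε / 2 * r / (1 + r)
  have hc0 : 0 < c := by positivity
  have hblock : Tendsto (fun m : ℕ => (⌊r * m⌋₊ : ℝ) * (ε / 2) / (m + ⌊r * m⌋₊)) atTop (𝓝 c) := by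
    have hfrac := (tendsto_nat_floor_mul_div_atTop hr0.le).comp tendsto_natCast_atTop_atTop
    refine ((hfrac.const_mul (ε / 2)).div (tendsto_const_nhds.add hfrac)
      (by positivity)).congr' ?_
    filter_upwards [eventually_gt_atTop 0] with m hm
    have hmR : (m : ℝ) ≠ 0 := by positivity
    simp only [Function.comp_apply, Pi.div_apply]
    field_simp
  have htail := tendsto_sum_nat_add fun n : ℕ => a n / n
  obtain ⟨m, hεa, hblock_m, htail_m, hstep_m, hm⟩ := (hfreq.and_eventually
    ((hblock.eventually (lt_mem_nhds (half_lt_self hc0))).and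
    ((htail.eventually (gt_mem_nhds (half_pos hc0))).and
    ((eventually_forall_ge_atTop.2 hstep).and (eventually_gt_atTop 0))))).exists
  have hL : C * ⌊r * m⌋₊ ≤ ε * m / 2 := by
    calc C * ⌊r * m⌋₊ ≤ C * (r * m) := by gcongr; exact Nat.floor_le (by positivity)
      _ = ε * m / 2 := by rw [hr]; field_simp
  have hlower := le_sum_Ico_div_of_abs_succ_sub_le hm hC.le hε.le hstep_m hεa hL
  have hupper := sum_Ico_le_tsum_nat_add (fun n => div_nonneg (ha n) n.cast_nonneg) hsum m
    (m + ⌊r * m⌋₊)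
  linarith

theorem stmt_18 (a : ℕ → ℝ) (ha : ∀ n, 0 ≤ a n)
    (hsum : Summable (fun n : ℕ => a n / n))
    (hnot : ¬ Tendsto a atTop (nhds 0)) :
    ∀ C : ℝ, 0 < C → {n : ℕ | C / n < |a (n + 1) - a n|}.Infinite := by
  intro C hC hfin
  refine hnot (tendsto_zero_of_summable_div_of_abs_succ_sub_le ha hsum hC ?_)
  filter_upwards [Nat.cofinite_eq_atTop ▸ hfin.eventually_cofinite_notMem] with n hn
  simpa using hn
end
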